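/- arXiv:1306.2715 — 4 statements merged into one kernel-verified Lean document; each statement's English description precedes it below -/
import Mathlib

section
/- Let φ be a real number in [0,1) with binary expansion φ = 0.x₁x₂…x_{n+2}, and for k = 1,…,n let β_k be a real number with |2^(k-1)φ - β_k| mod 1 < 1/8. Define bits x̂_{n}, x̂_{n+1}, x̂_{n+2} from β_n and iteratively for k = n-1,…,1 set x̂_k = 0 if |0.0x̂_{k+1}x̂_{k+2} - β_k| mod 1 < 1/4 and x̂_k = 1 if |0.1x̂_{k+1}x̂_{k+2} - β_k| mod 1 < 1/4. Then |0.x̂₁x̂₂…x̂_{n+2} - φ| mod 1 < 2^{-(n+2)}. -/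
/-- Distance from a real number to the nearest integer. -/
noncomputable def distMod1 (z : ℝ) : ℝ := |z - round z|

/-!
Write `T y k = 0.y_k … y_{n+2}`. Then `2^(k-1) φ ≡ T x k (mod 1)`, and the errors
`d_k = T x̂ k - T x k` satisfy `2 d_k ≡ d_{k+1} (mod 1)`. Writing `‖·‖` for the distance to `ℤ`,
at `k = n` the three bits read off from `β_n` give `‖d_n‖ < 1/8`. At an earlier `k`, the
inference rule (tolerance `1/4`) and the estimate `β_k` (tolerance `1/8`) keep `‖d_k‖` below
`1/2 - 2^(k-n-3)`, while `‖2 d_k‖ = ‖d_{k+1}‖ < 2^(k-n-2)`; these two bounds together force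
`‖d_k‖ < 2^(k-n-3)`. So the error halves at each step back to `k = 1`.
-/

open Finset AddCommGroup

lemma distMod1_eq_norm (z : ℝ) : distMod1 z = ‖(z : UnitAddCircle)‖ :=
  UnitAddCircle.norm_eq.symm

lemma distMod1_le_abs (z : ℝ) : distMod1 z ≤ |z| := by
  unfold distMod1
  simpa using round_le z 0

lemma distMod1_sub_comm (a b : ℝ) : distMod1 (a - b) = distMod1 (b - a) := by
  simp only [distMod1_eq_norm, AddCircle.coe_sub, norm_sub_rev]

lemma distMod1_sub_le (a b c : ℝ) :
    distMod1 (a - c) ≤ distMod1 (a - b) + distMod1 (b - c) := by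
  simp only [distMod1_eq_norm, AddCircle.coe_sub]
  exact norm_sub_le_norm_sub_add_norm_sub _ _ _

lemma AddCommGroup.ModEq.distMod1_eq {a b : ℝ} (h : a ≡ b [PMOD 1]) :
    distMod1 a = distMod1 b := by
  rw [distMod1_eq_norm, distMod1_eq_norm, modEq_iff_eq_mod_zmultiples.1 h]

lemma distMod1_lt_of_distMod1_two_mul_lt {w ε : ℝ} (h2 : distMod1 (2 * w) < 2 * ε)
    (h : distMod1 w < 1 / 2 - ε) : distMod1 w < ε := by
  unfold distMod1 at *
  -- `round (2 * w) - 2 * round w` is an integer of absolute value `< 2ε + (1 - 2ε) = 1`.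
  have hround : round (2 * w) = 2 * round w := by
    have hlt : |((round (2 * w) - 2 * round w : ℤ) : ℝ)| < 1 := by
      calc |((round (2 * w) - 2 * round w : ℤ) : ℝ)|
          = |2 * (w - round w) - (2 * w - round (2 * w))| := by push_cast; ring_nf
        _ ≤ |2 * (w - round w)| + |2 * w - round (2 * w)| := abs_sub _ _
        _ < 1 := by rw [abs_mul, abs_two]; linarith
    rw [← Int.cast_abs, ← Int.cast_one, Int.cast_lt, Int.abs_lt_one_iff] at hlt
    omega
  rw [hround, Int.cast_mul, Int.cast_two, ← mul_sub, abs_mul, abs_two] at h2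
  linarith

lemma distMod1_lt_div_two_pow_of_backward_halving {d : ℕ → ℝ} {a n : ℕ} {ε : ℝ}
    (hn : distMod1 (d n) < ε)
    (hdouble : ∀ k, a ≤ k → k < n → 2 * d k ≡ d (k + 1) [PMOD 1])
    (hcoarse : ∀ k, a ≤ k → k < n → distMod1 (d k) < 1 / 2 - ε / 2 ^ (n - k))
    {k : ℕ} (hak : a ≤ k) (hkn : k ≤ n) : distMod1 (d k) < ε / 2 ^ (n - k) := by
  induction hkn using Nat.decreasingInduction with
  | self => simpa using hn
  | of_succ k hk ih =>
    refine distMod1_lt_of_distMod1_two_mul_lt ?_ (hcoarse k hak hk)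
    have hpow : (2 : ℝ) ^ (n - k) = 2 * 2 ^ (n - (k + 1)) := by
      rw [← pow_succ']
      congr 1
      omega
    rw [(hdouble k hak hk).distMod1_eq, hpow, mul_div_assoc', mul_div_mul_left _ _ two_ne_zero]
    exact ih (by omega)

/-- `binFrac y k m` is the binary fraction `0.y_k y_{k+1} … y_{k+m-1}`. -/
noncomputable def binFrac (y : ℕ → ℕ) (k m : ℕ) : ℝ :=
  ∑ i ∈ range m, (y (k + i) : ℝ) / 2 ^ (i + 1)

lemma sum_Icc_div_two_pow_eq_binFrac (y : ℕ → ℕ) (m : ℕ) :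
    ∑ i ∈ Icc 1 m, (y i : ℝ) / 2 ^ i = binFrac y 1 m := by
  rw [← Ico_add_one_right_eq_Icc, sum_Ico_eq_sum_range, binFrac, Nat.add_sub_cancel]
  simp only [add_comm 1]

lemma binFrac_nonneg (y : ℕ → ℕ) (k m : ℕ) : 0 ≤ binFrac y k m := by
  unfold binFrac
  positivity

lemma binFrac_add (y : ℕ → ℕ) (k j m : ℕ) :
    binFrac y k (j + m) = binFrac y k j + binFrac y (k + j) m / 2 ^ j := by
  rw [binFrac, sum_range_add, binFrac, binFrac, sum_div]
  congr 1
  refine sum_congr rfl fun i _ => ?_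
  rw [add_assoc, div_div, ← pow_add]
  ring_nf

lemma binFrac_three (y : ℕ → ℕ) (k : ℕ) :
    binFrac y k 3 = (y k : ℝ) / 2 + (y (k + 1) : ℝ) / 4 + (y (k + 2) : ℝ) / 8 := by
  simp only [binFrac, sum_range_succ, sum_range_zero]
  norm_num

lemma binFrac_le_one_sub {y : ℕ → ℕ} (hy : ∀ i, y i ≤ 1) (k m : ℕ) :
    binFrac y k m ≤ 1 - 1 / 2 ^ m := by
  induction m with
  | zero => simp [binFrac]
  | succ m ih =>
    have hbit : (y (k + m) : ℝ) ≤ 1 := by exact_mod_cast hy (k + m)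
    rw [binFrac, sum_range_succ, ← binFrac, pow_succ, ← div_div, ← div_div]
    have hlast : (y (k + m) : ℝ) / 2 ^ m ≤ 1 / 2 ^ m := by gcongr
    linarith

lemma exists_two_pow_mul_binFrac_eq_natCast (y : ℕ → ℕ) (k j : ℕ) :
    ∃ N : ℕ, 2 ^ j * binFrac y k j = N := by
  induction j with
  | zero => exact ⟨0, by simp [binFrac]⟩
  | succ j ih =>
    obtain ⟨N, hN⟩ := ih
    refine ⟨2 * N + y (k + j), ?_⟩
    rw [binFrac, sum_range_succ, ← binFrac, mul_add, pow_succ, mul_comm (2 ^ j : ℝ) 2,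
      mul_assoc, hN]
    field_simp
    push_cast
    ring

lemma two_pow_mul_binFrac_modEq (y : ℕ → ℕ) (k j m : ℕ) :
    2 ^ j * binFrac y k (j + m) ≡ binFrac y (k + j) m [PMOD 1] := by
  obtain ⟨N, hN⟩ := exists_two_pow_mul_binFrac_eq_natCast y k j
  rw [binFrac_add, mul_add, hN, mul_div_cancel₀ _ (by positivity), add_comm]
  simpa using add_nsmul_modEq (p := (1 : ℝ)) (a := binFrac y (k + j) m) N

lemma distMod1_binFrac_sub_lt_of_bit_rule {y y' : ℕ → ℕ} (hy' : ∀ i, y' i ≤ 1) {k m : ℕ}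
    {b : ℝ} (hrule : distMod1 (binFrac y' k 3 - b) < 1 / 4)
    (hb : distMod1 (binFrac y k (3 + m) - b) < 1 / 8) :
    distMod1 (binFrac y' k (3 + m) - binFrac y k (3 + m)) < 1 / 2 - 1 / 8 / 2 ^ m := by
  have htail : distMod1 (binFrac y' k (3 + m) - binFrac y' k 3) ≤ 1 / 8 - 1 / 8 / 2 ^ m := by
    refine (distMod1_le_abs _).trans ?_
    rw [binFrac_add, add_sub_cancel_left, abs_of_nonneg (div_nonneg (binFrac_nonneg _ _ _)
      (by positivity)), show (2 : ℝ) ^ 3 = 8 by norm_num, div_right_comm (1 : ℝ) 8]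
    linarith [binFrac_le_one_sub hy' (k + 3) m]
  rw [distMod1_sub_comm] at hb
  linarith [distMod1_sub_le (binFrac y' k (3 + m)) (binFrac y' k 3) (binFrac y k (3 + m)),
    distMod1_sub_le (binFrac y' k 3) b (binFrac y k (3 + m))]

theorem kitaev_post_processing_general (n : ℕ) (hn : 1 ≤ n)
    (x : ℕ → ℕ)
    (φ : ℝ) (hφ : φ = ∑ i ∈ Finset.Icc 1 (n + 2), (x i : ℝ) / 2 ^ i)
    (β : ℕ → ℝ)
    (hβ : ∀ k ∈ Finset.Icc 1 n, distMod1 (2 ^ (k - 1) * φ - β k) < 1 / 8)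
    (x' : ℕ → ℕ) (hx' : ∀ i, x' i ≤ 1)
    -- the last three bits are read off from `β n`:
    (hlast : β n = (x' n : ℝ) / 2 + (x' (n + 1) : ℝ) / 4 + (x' (n + 2) : ℝ) / 8)
    -- for `k = n-1, …, 1`, the bit `x̂ k` is chosen so that
    -- `|0.x̂ₖ x̂ₖ₊₁ x̂ₖ₊₂ - βₖ| (mod 1) < 1/4`:
    (hiter : ∀ k ∈ Finset.Icc 1 (n - 1),
      distMod1 ((x' k : ℝ) / 2 + (x' (k + 1) : ℝ) / 4 + (x' (k + 2) : ℝ) / 8 - β k)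
        < 1 / 4) :
    distMod1 ((∑ i ∈ Finset.Icc 1 (n + 2), (x' i : ℝ) / 2 ^ i) - φ)
      < 2 ^ (-(n + 2) : ℤ) := by
  -- `T y k = 0.y_k … y_{n+2}`, which is `2^(k-1) φ` modulo `1` for `y = x`.
  set T : (ℕ → ℕ) → ℕ → ℝ := fun y k => binFrac y k (3 + (n - k)) with hT
  have hTβ : ∀ k, 1 ≤ k → k ≤ n → distMod1 (T x k - β k) < 1 / 8 := by
    intro k hk hkn
    have hshift := two_pow_mul_binFrac_modEq x 1 (k - 1) (3 + (n - k))
    rw [show k - 1 + (3 + (n - k)) = n + 2 by omega, show 1 + (k - 1) = k by omega,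
      ← sum_Icc_div_two_pow_eq_binFrac, ← hφ] at hshift
    rw [← (hshift.sub_right (β k)).distMod1_eq]
    exact hβ k (mem_Icc.2 ⟨hk, hkn⟩)
  have hdouble : ∀ k, 1 ≤ k → k < n →
      2 * (T x' k - T x k) ≡ T x' (k + 1) - T x (k + 1) [PMOD 1] := by
    intro k _ hkn
    have hbits : 3 + (n - k) = 1 + (3 + (n - (k + 1))) := by omega
    simpa only [hT, hbits, pow_one, mul_sub] using
      (two_pow_mul_binFrac_modEq x' k 1 _).sub (two_pow_mul_binFrac_modEq x k 1 _)
  have hcoarse : ∀ k, 1 ≤ k → k < n → distMod1 (T x' k - T x k) < 1 / 2 - 1 / 8 / 2 ^ (n - k) :=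
    fun k hk hkn => distMod1_binFrac_sub_lt_of_bit_rule hx'
      (by rw [binFrac_three]; exact hiter k (mem_Icc.2 ⟨hk, by omega⟩)) (hTβ k hk hkn.le)
  have hbase : distMod1 (T x' n - T x n) < 1 / 8 := by
    rw [distMod1_sub_comm]
    simpa [hT, binFrac_three, ← hlast] using hTβ n hn le_rfl
  have h := distMod1_lt_div_two_pow_of_backward_halving hbase hdouble hcoarse le_rfl hn
  have hbits : 3 + (n - 1) = n + 2 := by omega
  rw [hφ, sum_Icc_div_two_pow_eq_binFrac, sum_Icc_div_two_pow_eq_binFrac]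
  simp only [hT, hbits] at h
  convert h using 1
  rw [zpow_neg, show ((n : ℤ) + 2) = ((3 + (n - 1) : ℕ) : ℤ) by omega, zpow_natCast, pow_add]
  ring

/-- Correctness of Kitaev's classical post-processing: from `1/8`-precise estimates
`β k` of the phases `2^(k-1) φ (mod 1)`, any sequence of bits `x̂` obtained by the
iterative inference rule reconstructs `φ` to precision `2^(-(n+2))`. -/
theorem kitaev_post_processing (n : ℕ) (hn : 1 ≤ n)
    (x : ℕ → ℕ) (hx : ∀ i, x i ≤ 1)
    (φ : ℝ) (hφ : φ = ∑ i ∈ Finset.Icc 1 (n + 2), (x i : ℝ) / 2 ^ i)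
    (β : ℕ → ℝ)
    (hβ : ∀ k ∈ Finset.Icc 1 n, distMod1 (2 ^ (k - 1) * φ - β k) < 1 / 8)
    (x' : ℕ → ℕ) (hx' : ∀ i, x' i ≤ 1)
    -- the last three bits are read off from `β n`:
    (hlast : β n = (x' n : ℝ) / 2 + (x' (n + 1) : ℝ) / 4 + (x' (n + 2) : ℝ) / 8)
    -- for `k = n-1, …, 1`, the bit `x̂ k` is chosen so that
    -- `|0.x̂ₖ x̂ₖ₊₁ x̂ₖ₊₂ - βₖ| (mod 1) < 1/4`:
    (hiter : ∀ k ∈ Finset.Icc 1 (n - 1),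
      distMod1 ((x' k : ℝ) / 2 + (x' (k + 1) : ℝ) / 4 + (x' (k + 2) : ℝ) / 8 - β k)
        < 1 / 4) :
    distMod1 ((∑ i ∈ Finset.Icc 1 (n + 2), (x' i : ℝ) / 2 ^ i) - φ)
      < 2 ^ (-(n + 2) : ℤ) :=
  kitaev_post_processing_general n hn x φ hφ β hβ x' hx' hlast hiter
end

section
/- For real numbers φ ∈ [0,1) with binary digits x₁, x₂, x₃, … and β with |φ - β| mod 1 < 1/8, given the true digits x₂, x₃, the value b = x₁ is the unique bit b ∈ {0,1} satisfying |0.b x₂ x₃ - β| mod 1 < 1/4. -/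
lemma distMod1_le_int (z : ℝ) (n : ℤ) : distMod1 z ≤ |z - n| := by
  unfold distMod1
  rcases eq_or_ne n (round z) with h | h
  · rw [h]
  · have h1 : (1 : ℝ) ≤ |(n : ℝ) - round z| := by
      have : n - round z ≠ 0 := sub_ne_zero.mpr h
      calc (1:ℝ) ≤ |(n - round z : ℤ)| := by exact_mod_cast Int.one_le_abs this
        _ = |(n : ℝ) - round z| := by push_cast; ring_nf
    have h2 : |z - round z| ≤ 1 / 2 := abs_sub_round z
    have := abs_sub_abs_le_abs_sub ((n : ℝ) - round z) (z - round z)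
    have h3 : |(n : ℝ) - round z - (z - round z)| = |z - n| := by
      rw [← abs_neg]; ring_nf
    linarith [abs_nonneg (z - (n:ℝ))]

lemma distMod1_triangle (a b : ℝ) : distMod1 (a + b) ≤ distMod1 a + distMod1 b := by
  have h := distMod1_le_int (a + b) (round a + round b)
  unfold distMod1 at *
  have : |a + b - ((round a + round b : ℤ) : ℝ)| ≤ |a - round a| + |b - round b| := by
    push_cast
    calc |a + b - ((round a : ℝ) + round b)| = |(a - round a) + (b - round b)| := by ring_nf
      _ ≤ _ := abs_add_le _ _
  linarith

lemma distMod1_neg (z : ℝ) : distMod1 (-z) = distMod1 z := by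
  apply le_antisymm
  · have := distMod1_le_int (-z) (-round z)
    unfold distMod1 at *
    calc |(-z) - round (-z)| ≤ |(-z) - ((-round z : ℤ) : ℝ)| := this
      _ = |z - round z| := by push_cast; rw [← abs_neg]; ring_nf
  · have := distMod1_le_int z (-round (-z))
    unfold distMod1 at *
    calc |z - round z| ≤ |z - ((-round (-z) : ℤ) : ℝ)| := this
      _ = |(-z) - round (-z)| := by push_cast; rw [← abs_neg]; ring_nf

lemma distMod1_half : distMod1 (1/2 : ℝ) = 1/2 := by
  unfold distMod1
  norm_num [round_eq]

/-- Uniqueness/correctness of a single inference step in Kitaev's iterative phase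
reconstruction: given the true digits `x₂, x₃`, the bit `b = x₁` is the unique bit
satisfying `|0.b x₂ x₃ - β| mod 1 < 1/4`. -/
theorem kitaev_bit_inference_unique (φ : ℝ) (hφ : φ ∈ Set.Ico (0 : ℝ) 1)
    (x₁ x₂ x₃ : ℕ) (hx₁ : x₁ ≤ 1) (hx₂ : x₂ ≤ 1) (hx₃ : x₃ ≤ 1)
    (hdigits : |φ - ((x₁ : ℝ) / 2 + (x₂ : ℝ) / 4 + (x₃ : ℝ) / 8)| ≤ 1 / 8)
    (β : ℝ) (hβ : distMod1 (φ - β) < 1 / 8) :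
    distMod1 ((x₁ : ℝ) / 2 + (x₂ : ℝ) / 4 + (x₃ : ℝ) / 8 - β) < 1 / 4 ∧
      ∀ b : ℕ, b ≤ 1 →
        distMod1 ((b : ℝ) / 2 + (x₂ : ℝ) / 4 + (x₃ : ℝ) / 8 - β) < 1 / 4 →
          b = x₁ := by
  set A : ℝ := (x₁ : ℝ) / 2 + (x₂ : ℝ) / 4 + (x₃ : ℝ) / 8 with hA
  have key : distMod1 (A - β) < 1 / 4 := by
    have h1 : distMod1 (A - β) ≤ distMod1 (A - φ) + distMod1 (φ - β) := by
      have := distMod1_triangle (A - φ) (φ - β)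
      have e : A - φ + (φ - β) = A - β := by ring
      rwa [e] at this
    have h2 : distMod1 (A - φ) ≤ 1 / 8 := by
      calc distMod1 (A - φ) ≤ |A - φ - (0 : ℤ)| := distMod1_le_int _ 0
        _ = |φ - A| := by rw [← abs_neg]; ring_nf
        _ ≤ 1/8 := hdigits
    linarith
  refine ⟨key, fun b hb hbd => ?_⟩
  by_contra hne
  set B : ℝ := (b : ℝ) / 2 + (x₂ : ℝ) / 4 + (x₃ : ℝ) / 8 with hB
  have hdiff : B - A = 1/2 ∨ B - A = -(1/2) := by
    interval_cases b <;> interval_cases x₁ <;> simp_all [hB, hA] <;> ring_nf <;> norm_num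
  have htri : distMod1 (B - A) ≤ distMod1 (B - β) + distMod1 (A - β) := by
    have := distMod1_triangle (B - β) (-(A - β))
    rw [distMod1_neg] at this
    have e : B - β + -(A - β) = B - A := by ring
    rwa [e] at this
  have hhalf : distMod1 (B - A) = 1/2 := by
    rcases hdiff with h | h <;> rw [h]
    · exact distMod1_half
    · rw [distMod1_neg]; exact distMod1_half
  linarith
end

section
/- If s and t are real numbers with |s - sin(2πφ)| < δ and |t - cos(2πφ)| < δ for δ = (1/4)√(1 - 1/√2), and φ ∈ [0,1) with cos(2πφ) ≠ 0, t ≠ 0, and (s,t) lies in the same half-plane sign configuration as (sin 2πφ, cos 2πφ), then |(1/(2π)) arctan(s/t) - φ| mod 1 < 1/16 (after the appropriate branch correction determined by the signs of s and t). -/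
open Real

lemma distMod1_div_two_pi_le (x : ℝ) (k : ℤ) :
    distMod1 (x / (2 * π)) ≤ |x - 2 * π * k| / (2 * π) := by
  have hπ : 0 < 2 * π := by positivity
  calc distMod1 (x / (2 * π)) ≤ |x / (2 * π) - k| := round_le _ k
    _ = |x - 2 * π * k| / (2 * π) := by
      rw [← abs_of_pos hπ, ← abs_div, abs_of_pos hπ]
      congr 1
      field_simp

lemma sqrt_one_add_div_sq {s t : ℝ} (ht : t ≠ 0) : √(1 + (s / t) ^ 2) = √(t ^ 2 + s ^ 2) / |t| := by
  rw [eq_div_iff (abs_ne_zero.mpr ht), ← sqrt_sq_eq_abs, ← sqrt_mul (by positivity)]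
  congr 1
  field_simp

lemma sqrt_mul_cos_sin_arctan_add_branch {s t : ℝ} (ht : t ≠ 0) :
    √(t ^ 2 + s ^ 2) * cos (arctan (s / t) + if t < 0 then π else 0) = t ∧
    √(t ^ 2 + s ^ 2) * sin (arctan (s / t) + if t < 0 then π else 0) = s := by
  split_ifs with hneg
  · rw [cos_add_pi, sin_add_pi, cos_arctan, sin_arctan, sqrt_one_add_div_sq ht, abs_of_neg hneg]
    constructor <;> field_simp
  · rw [add_zero, cos_arctan, sin_arctan, sqrt_one_add_div_sq ht, abs_of_nonneg (not_lt.mp hneg)]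
    constructor <;> field_simp

lemma sub_cos_sq_add_sub_sin_sq (r ψ θ : ℝ) :
    (r * cos ψ - cos θ) ^ 2 + (r * sin ψ - sin θ) ^ 2 =
      (r * cos (ψ - θ) - 1) ^ 2 + (r * sin (ψ - θ)) ^ 2 := by
  rw [cos_sub, sin_sub]
  linear_combination (1 - r ^ 2 * (sin ψ ^ 2 + cos ψ ^ 2)) * sin_sq_add_cos_sq θ

lemma cos_pos_and_abs_sin_lt_of_sq_add_sq_lt {r α ε : ℝ} (hr : 0 < r) (hε₀ : 0 ≤ ε)
    (hε : ε ≤ 1 / 2) (h : (r * cos α - 1) ^ 2 + (r * sin α) ^ 2 < ε ^ 2) :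
    0 < cos α ∧ |sin α| < 2 * ε := by
  have hc : |r * cos α - 1| < ε := abs_lt_of_sq_lt_sq (by nlinarith) hε₀
  have hs : r * |sin α| < ε := by
    rw [← abs_of_pos hr, ← abs_mul]; exact abs_lt_of_sq_lt_sq (by nlinarith) hε₀
  have hrc : 1 / 2 < r * cos α := by linarith [(abs_lt.mp hc).1]
  have hr_half : 1 / 2 < r := hrc.trans_le (mul_le_of_le_one_right hr.le (cos_le_one α))
  exact ⟨pos_of_mul_pos_right (a := r) (by linarith) hr.le, by nlinarith [abs_nonneg (sin α)]⟩

lemma exists_int_abs_sub_lt_of_cos_pos {x β : ℝ} (hβ : β ∈ Set.Icc (-(π / 2)) (π / 2))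
    (hcos : 0 < cos x) (hsin : |sin x| < sin β) : ∃ k : ℤ, |x - 2 * π * k| < β := by
  obtain ⟨k, hk⟩ := Angle.angle_eq_iff_two_pi_dvd_sub.mp (Angle.coe_toReal (x : Angle)).symm
  refine ⟨k, ?_⟩
  set y := (x : Angle).toReal
  have hy : |y| < π / 2 := by
    rwa [← Angle.cos_pos_iff_abs_toReal_lt_pi_div_two, Angle.cos_coe]
  replace hsin : |sin y| < sin β := by rwa [Angle.sin_toReal, Angle.sin_coe]
  obtain ⟨hs₁, hs₂⟩ := abs_lt.mp hsin
  have hmono {a : ℝ} (ha : |a| < π / 2) (h : sin a < sin β) : a < β :=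
    strictMonoOn_sin.lt_iff_lt ⟨by linarith [neg_abs_le a], by linarith [le_abs_self a]⟩ hβ |>.mp h
  rw [show x - 2 * π * k = y by linarith, abs_lt]
  refine ⟨?_, hmono hy hs₂⟩
  have := hmono (by rwa [abs_neg]) (by rw [sin_neg]; linarith)
  linarith

lemma eight_mul_sq_quarter_sqrt_one_sub_inv_sqrt_two :
    8 * ((1 / 4) * √(1 - 1 / √2)) ^ 2 = sin (π / 8) ^ 2 := by
  have hsqrt2 : √2 ^ 2 = 2 := sq_sqrt (by norm_num)
  have hle : √2 ≤ 2 := by nlinarith [sqrt_nonneg 2]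
  have hinv_le : 1 / √2 ≤ 1 := by
    rw [div_le_one (by positivity)]; exact one_le_sqrt.mpr (by norm_num)
  rw [sin_pi_div_eight, mul_pow, sq_sqrt (by linarith), div_pow (√(2 - √2)), sq_sqrt (by linarith)]
  field_simp
  nlinarith

theorem arctan_phase_recovery_general (φ s t : ℝ)
    (hs : |s - Real.sin (2 * Real.pi * φ)| < (1/4) * Real.sqrt (1 - 1 / Real.sqrt 2))
    (ht : |t - Real.cos (2 * Real.pi * φ)| < (1/4) * Real.sqrt (1 - 1 / Real.sqrt 2))
    (ht0 : t ≠ 0) :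
    distMod1 ((1 / (2 * Real.pi)) * Real.arctan (s / t) +
        (if t < 0 then (1:ℝ)/2 else 0) - φ) < 1 / 16 := by
  set θ := 2 * π * φ
  set ψ := arctan (s / t) + if t < 0 then π else 0
  obtain ⟨hrc, hrs⟩ := sqrt_mul_cos_sin_arctan_add_branch (s := s) ht0
  have hr : 0 < √(t ^ 2 + s ^ 2) := sqrt_pos.mpr (by positivity)
  have hsin8 : 0 < sin (π / 8) := sin_pos_of_pos_of_lt_pi (by positivity) (by linarith [pi_pos])
  have herr : (√(t ^ 2 + s ^ 2) * cos (ψ - θ) - 1) ^ 2 + (√(t ^ 2 + s ^ 2) * sin (ψ - θ)) ^ 2 <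
      (sin (π / 8) / 2) ^ 2 := by
    rw [← sub_cos_sq_add_sub_sin_sq, hrc, hrs]
    have hs2 := pow_lt_pow_left₀ hs (abs_nonneg _) two_ne_zero
    have ht2 := pow_lt_pow_left₀ ht (abs_nonneg _) two_ne_zero
    rw [sq_abs] at hs2 ht2
    linarith [eight_mul_sq_quarter_sqrt_one_sub_inv_sqrt_two]
  obtain ⟨hcos, hsin⟩ := cos_pos_and_abs_sin_lt_of_sq_add_sq_lt hr (by positivity)
    (by linarith [sin_le_one (π / 8)]) herr
  obtain ⟨k, hk⟩ := exists_int_abs_sub_lt_of_cos_pos (β := π / 8)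
    ⟨by linarith [pi_pos], by linarith [pi_pos]⟩ hcos (by linarith)
  have hX : 1 / (2 * π) * arctan (s / t) + (if t < 0 then (1 : ℝ) / 2 else 0) - φ =
      (ψ - θ) / (2 * π) := by
    simp only [ψ, θ]
    split_ifs <;> field_simp; ring
  rw [hX]
  calc distMod1 ((ψ - θ) / (2 * π)) ≤ |ψ - θ - 2 * π * k| / (2 * π) := distMod1_div_two_pi_le _ k
    _ < (π / 8) / (2 * π) := by gcongr
    _ = 1 / 16 := by field_simp; ring

/-- Robustness of phase recovery via the inverse tangent: estimates of `sin (2πφ)`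
and `cos (2πφ)` to within `δ = (1/4)√(1 - 1/√2)` determine `φ` modulo 1 to precision
`1/16`, after the branch correction determined by the signs of the estimates. -/
theorem arctan_phase_recovery (φ s t : ℝ) (hφ : φ ∈ Set.Ico (0 : ℝ) 1)
    (hs : |s - Real.sin (2 * Real.pi * φ)| < (1/4) * Real.sqrt (1 - 1 / Real.sqrt 2))
    (ht : |t - Real.cos (2 * Real.pi * φ)| < (1/4) * Real.sqrt (1 - 1 / Real.sqrt 2))
    (hcos : Real.cos (2 * Real.pi * φ) ≠ 0) (ht0 : t ≠ 0)
    (hsignt : t * Real.cos (2 * Real.pi * φ) > 0)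
    (hsigns : s * Real.sin (2 * Real.pi * φ) ≥ 0) :
    distMod1 ((1 / (2 * Real.pi)) * Real.arctan (s / t) +
        (if t < 0 then (1:ℝ)/2 else 0) - φ) < 1 / 16 :=
  arctan_phase_recovery_general φ s t hs ht ht0
end

section
/- For all real x with |x| ≤ 1 - δ where δ = (1/4)√(1 - 1/√2), we have |arctan(x/√(1-x²)) - arctan((x+δ)/(√(1-x²) - δ))| ≤ π/16 whenever √(1-x²) - δ > 0. -/
/-!
Write `x = sin θ` and `c = √(1 - x²) = cos θ`, so that the first angle is `θ`. By the
arctangent subtraction formula the difference of the two angles is `arctan(δ u / (1 + δ v))` up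
to sign, where `u = x + c`, `v = x - c` satisfy `u² + v² = 2`. Since `|arctan z| ≤ |z|`, it
suffices that `δ |u| - k δ v ≤ k` for `k = π / 16`, and by Cauchy–Schwarz the left side is at
most `δ √(2 (1 + k²))`, which is `≤ k` for the given `δ`.
-/

open Real

namespace Real

lemma arctan_le_self {y : ℝ} (hy : 0 ≤ y) : arctan y ≤ y := by
  rcases lt_or_ge y (π / 2) with h | h
  · calc arctan y ≤ arctan (tan y) := arctan_le_arctan_iff.mpr (le_tan hy h)
      _ = y := arctan_tan (by linarith [pi_pos]) h
  · linarith [arctan_lt_pi_div_two y]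

lemma abs_arctan_le_abs (z : ℝ) : |arctan z| ≤ |z| := by
  rcases le_or_gt 0 z with h | h
  · rw [abs_of_nonneg h, abs_of_nonneg (arctan_nonneg.mpr h)]
    exact arctan_le_self h
  · rw [abs_of_neg h, abs_of_neg (arctan_lt_zero.mpr h), ← arctan_neg]
    exact arctan_le_self (by linarith)

lemma arctan_sub_arctan {a b : ℝ} (h : 0 < 1 + a * b) :
    arctan a - arctan b = arctan ((a - b) / (1 + a * b)) := by
  rw [sub_eq_add_neg, ← arctan_neg, arctan_add (by linarith), mul_neg, sub_neg_eq_add,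
    ← sub_eq_add_neg]

end Real

lemma div_sub_div_perturb_eq {s c δ : ℝ} (hsc : s ^ 2 + c ^ 2 = 1) (hc : c ≠ 0)
    (hcδ : c - δ ≠ 0) :
    (s / c - (s + δ) / (c - δ)) / (1 + s / c * ((s + δ) / (c - δ))) =
      -(δ * (s + c) / (1 + δ * (s - c))) := by
  have hden : c * (c - δ) + s * (s + δ) = 1 + δ * (s - c) := by linear_combination hsc
  rw [div_sub_div _ _ hc hcδ, div_mul_div_comm, one_add_div (mul_ne_zero hc hcδ),
    div_div_div_cancel_right₀ (mul_ne_zero hc hcδ), hden, ← neg_div]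
  congr 1
  ring

/-- Cauchy–Schwarz: `(δ |u| - k δ v)² ≤ δ² (1 + k²) (u² + v²)`. -/
lemma abs_mul_le_mul_one_add_mul {u v δ k : ℝ} (huv : u ^ 2 + v ^ 2 = 2) (hk : 0 ≤ k)
    (hδk : 2 * δ ^ 2 * (1 + k ^ 2) ≤ k ^ 2) :
    |δ * u| ≤ k * (1 + δ * v) := by
  have hcs : (|δ * u| - k * (δ * v)) ^ 2 ≤ k ^ 2 := by
    nlinarith [sq_nonneg (k * |δ * u| + δ * v), sq_abs (δ * u)]
  nlinarith [abs_le_of_sq_le_sq' hcs hk]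

theorem abs_arctan_sub_arctan_perturb_le {s c δ k : ℝ} (hsc : s ^ 2 + c ^ 2 = 1) (hc : 0 < c)
    (hcδ : δ < c) (hk : 0 ≤ k) (hδk : 2 * δ ^ 2 * (1 + k ^ 2) ≤ k ^ 2) :
    |arctan (s / c) - arctan ((s + δ) / (c - δ))| ≤ k := by
  have huv : (s + c) ^ 2 + (s - c) ^ 2 = 2 := by linear_combination 2 * hsc
  have hδ : 2 * δ ^ 2 < 1 := by nlinarith [sq_nonneg k, sq_nonneg δ]
  have hpos : 0 < 1 + δ * (s - c) := by
    nlinarith [sq_nonneg (s + c), sq_nonneg (δ * (s - c) + 1)]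
  have hprod : 0 < 1 + s / c * ((s + δ) / (c - δ)) := by
    rw [div_mul_div_comm, one_add_div (by positivity)]
    refine div_pos ?_ (mul_pos hc (sub_pos.mpr hcδ))
    linear_combination hpos - hsc
  rw [arctan_sub_arctan hprod, div_sub_div_perturb_eq hsc hc.ne' (sub_pos.mpr hcδ).ne']
  calc |arctan (-(δ * (s + c) / (1 + δ * (s - c))))|
      ≤ |-(δ * (s + c) / (1 + δ * (s - c)))| := abs_arctan_le_abs _
    _ = |δ * (s + c)| / (1 + δ * (s - c)) := by rw [abs_neg, abs_div, abs_of_pos hpos]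
    _ ≤ k := div_le_of_le_mul₀ hpos.le hk (abs_mul_le_mul_one_add_mul huv hk hδk)

lemma two_mul_sq_mul_one_add_sq_le_sq_pi_div_sixteen :
    2 * ((1 / 4) * √(1 - 1 / √2)) ^ 2 * (1 + (π / 16) ^ 2) ≤ (π / 16) ^ 2 := by
  have h2 : √2 ^ 2 = 2 := sq_sqrt (by norm_num)
  have hinv : (0.7067 : ℝ) ≤ 1 / √2 := by
    rw [le_div_iff₀ (by positivity)]
    nlinarith [sqrt_nonneg 2]
  have hinv1 : 1 / √2 ≤ 1 := (div_le_one₀ (by positivity)).mpr one_lt_sqrt_two.le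
  rw [mul_pow, sq_sqrt (by linarith)]
  nlinarith [pi_gt_d2]

theorem arctan_perturbation_bound_general (x : ℝ)
    (hpos : Real.sqrt (1 - x ^ 2) - (1/4) * Real.sqrt (1 - 1 / Real.sqrt 2) > 0) :
    |Real.arctan (x / Real.sqrt (1 - x ^ 2)) -
        Real.arctan ((x + (1/4) * Real.sqrt (1 - 1 / Real.sqrt 2)) /
          (Real.sqrt (1 - x ^ 2) - (1/4) * Real.sqrt (1 - 1 / Real.sqrt 2)))| ≤
      Real.pi / 16 := by
  have hδ : 0 ≤ (1/4) * √(1 - 1 / √2) := by positivity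
  have hc : 0 < √(1 - x ^ 2) := by linarith
  have hsc : x ^ 2 + √(1 - x ^ 2) ^ 2 = 1 := by
    rw [sq_sqrt (sqrt_pos.mp hc).le]
    ring
  exact abs_arctan_sub_arctan_perturb_le hsc hc (by linarith) (by positivity)
    two_mul_sq_mul_one_add_sq_le_sq_pi_div_sixteen

theorem arctan_perturbation_bound (x : ℝ)
    (hx : |x| ≤ 1 - (1/4) * Real.sqrt (1 - 1 / Real.sqrt 2))
    (hpos : Real.sqrt (1 - x ^ 2) - (1/4) * Real.sqrt (1 - 1 / Real.sqrt 2) > 0) :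
    |Real.arctan (x / Real.sqrt (1 - x ^ 2)) -
        Real.arctan ((x + (1/4) * Real.sqrt (1 - 1 / Real.sqrt 2)) /
          (Real.sqrt (1 - x ^ 2) - (1/4) * Real.sqrt (1 - 1 / Real.sqrt 2)))| ≤
      Real.pi / 16 :=
  arctan_perturbation_bound_general x hpos
end
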